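/- Let H be a complex Hilbert space, let B(H) be the algebra of bounded linear operators on H with the operator norm, and let x ∈ B(H) be non-zero. Then ℂx is a Chebyshev subspace of B(H) if and only if x is left invertible (there exists y ∈ B(H) with yx = 1) or right invertible (there exists y ∈ B(H) with xy = 1). -/

import Mathlib

/-!
If `x` is left invertible, every nonzero multiple of `x` is bounded below. For two best
approximations `v ≠ w` of `a` with `‖(v - w) h‖ ≥ m ‖h‖`, the parallelogram law in `H` gives
`‖(a - v) + (a - w)‖² ≤ 4 d² - m²`, where `d` is the distance from `a`, so the midpoint of `v`
and `w` would be strictly closer to `a`. Taking adjoints handles right invertible `x`.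

Conversely, let `x` be neither left nor right invertible. If `ker x` and `ker x*` are both
nonzero, the rank-one operator `a` mapping a unit vector of `ker x` to one of `ker x*` is at
distance `1` from `ℂx`, attained at `0` and at `x / ‖x‖`. If `x` is injective, the polar
decomposition `x = w |x|` has `w` an isometry, so `‖w - c x‖ = ‖1 - c |x|‖`; this is at least `1`
because `|x|` is not invertible, and at most `1` for `c = 0` and `c = 1 / ‖x‖`. If `x*` is
injective, the same argument applies to `x*`.
-/

open Filter Function Submodule
open scoped InnerProductSpace

section BestApproximation

variable {E : Type*} [SeminormedAddCommGroup E]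

def IsBestApprox (K : Set E) (a v : E) : Prop := v ∈ K ∧ ∀ w ∈ K, ‖a - v‖ ≤ ‖a - w‖

def IsChebyshev (K : Set E) : Prop := ∀ a, ∃! v, IsBestApprox K a v

theorem IsChebyshev.preimage_star [StarAddMonoid E] [NormedStarGroup E] {K : Set E}
    (hK : IsChebyshev K) : IsChebyshev (star ⁻¹' K) := by
  have norm_sub_star (a w : E) : ‖a - star w‖ = ‖star a - w‖ := by
    rw [← norm_star, star_sub, star_star]
  intro a
  obtain ⟨v, ⟨hvK, hv⟩, huniq⟩ := hK (star a)
  refine ⟨star v, ⟨by simpa using hvK, fun w hw => ?_⟩, fun w ⟨hwK, hw⟩ => ?_⟩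
  · simpa [norm_sub_star] using hv (star w) hw
  · rw [← huniq (star w) ⟨hwK, fun u hu => ?_⟩, star_star]
    simpa [norm_sub_star] using hw (star u) (by simpa using hu)

end BestApproximation

theorem Submodule.coe_span_singleton_star {R A : Type*} [CommSemiring R] [StarRing R]
    [AddCommMonoid A] [Module R A] [StarAddMonoid A] [StarModule R A] (x : A) :
    (span R {star x} : Set A) = star ⁻¹' span R {x} := by
  ext w
  simp only [SetLike.mem_coe, Set.mem_preimage, mem_span_singleton]
  constructor
  · rintro ⟨c, rfl⟩
    exact ⟨star c, by simp [star_smul]⟩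
  · rintro ⟨c, hc⟩
    exact ⟨star c, by rw [← star_smul, hc, star_star]⟩

section NormedSpace

variable {𝕜 E : Type*} [RCLike 𝕜] [NormedAddCommGroup E] [NormedSpace 𝕜 E]

theorem Submodule.exists_isBestApprox (K : Submodule 𝕜 E) [FiniteDimensional 𝕜 K] (a : E) :
    ∃ v, IsBestApprox K a v := by
  have hcont : Continuous fun w : K => ‖a - w‖ := by fun_prop
  have hcoercive : Tendsto (fun w : K => ‖a - w‖) (cocompact K) atTop := by
    refine tendsto_atTop_mono (fun w => ?_)
      (tendsto_atTop_add_const_right _ (-‖a‖) tendsto_norm_cocompact_atTop)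
    have := norm_sub_norm_le (w : E) a
    rw [norm_sub_rev] at this
    simp only [coe_norm] at this ⊢
    linarith
  obtain ⟨v, hv⟩ := hcont.exists_forall_le hcoercive
  exact ⟨v, v.2, fun w hw => hv ⟨w, hw⟩⟩

theorem not_isChebyshev_span_singleton_of_forall_le_norm_sub {x a : E} {c : 𝕜}
    (hcx : c • x ≠ 0) (ha : ‖a‖ ≤ 1) (hac : ‖a - c • x‖ ≤ 1) (hle : ∀ c' : 𝕜, 1 ≤ ‖a - c' • x‖) :
    ¬IsChebyshev (span 𝕜 {x} : Set E) := by
  have best (v : E) (hv : v ∈ span 𝕜 {x}) (hav : ‖a - v‖ ≤ 1) : IsBestApprox _ a v :=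
    ⟨hv, fun w hw => by
      obtain ⟨c', rfl⟩ := mem_span_singleton.1 hw
      exact hav.trans (hle c')⟩
  exact fun h => hcx <| (h a).unique (best _ (smul_mem _ c (mem_span_singleton_self x)) hac)
    (best 0 (zero_mem _) (by rwa [sub_zero]))

theorem isChebyshev_span_singleton_star_iff [StarAddMonoid E] [NormedStarGroup E]
    [StarModule 𝕜 E] (x : E) :
    IsChebyshev (span 𝕜 {star x} : Set E) ↔ IsChebyshev (span 𝕜 {x} : Set E) := by
  refine ⟨fun h => ?_, fun h => ?_⟩
  · simpa only [← coe_span_singleton_star, star_star] using h.preimage_star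
  · simpa only [← coe_span_singleton_star] using h.preimage_star

end NormedSpace

theorem one_le_norm_one_sub_smul_of_not_isUnit {𝕜 A : Type*} [NontriviallyNormedField 𝕜]
    [NormedRing A] [NormedAlgebra 𝕜 A] [CompleteSpace A] [NormOneClass A] {a : A}
    (ha : ¬IsUnit a) (c : 𝕜) : 1 ≤ ‖1 - c • a‖ := by
  have : Nontrivial A := NormOneClass.nontrivial
  have hca : ¬IsUnit (c • a) := by
    rcases eq_or_ne c 0 with rfl | hc
    · simp
    · rwa [show c • a = Units.mk0 c hc • a from rfl, isUnit_smul_iff]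
  have hmem : (1 : 𝕜) ∈ spectrum 𝕜 (1 - c • a) := by
    rwa [spectrum.mem_iff, map_one, sub_sub_cancel]
  simpa using spectrum.norm_le_norm_of_mem hmem

theorem CStarAlgebra.norm_one_sub_smul_le_one {A : Type*} [CStarAlgebra A] [PartialOrder A]
    [StarOrderedRing A] {a : A} (ha : 0 ≤ a) {t : ℝ} (ht : 0 ≤ t) (hta : t * ‖a‖ ≤ 1) :
    ‖1 - t • a‖ ≤ 1 := by
  nontriviality A
  have hle : t • a ≤ 1 := calc
    t • a ≤ t • algebraMap ℝ A ‖a‖ :=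
      smul_le_smul_of_nonneg_left IsSelfAdjoint.le_algebraMap_norm_self ht
    _ = algebraMap ℝ A (t * ‖a‖) := by rw [map_mul, Algebra.smul_def]
    _ ≤ 1 := by rw [← map_one (algebraMap ℝ A)]; exact algebraMap_le_algebraMap.2 hta
  rw [CStarAlgebra.norm_le_one_iff_of_nonneg _ (sub_nonneg.2 hle)]
  exact sub_le_self _ (smul_nonneg ht ha)

namespace ContinuousLinearMap

section BoundedBelow

variable {𝕜 E F : Type*} [RCLike 𝕜] [NormedAddCommGroup E] [NormedSpace 𝕜 E]
  [NormedAddCommGroup F] [InnerProductSpace 𝕜 F]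

theorem norm_add_sq_le_of_bounded_below [Nontrivial E] {p q : E →L[𝕜] F} {m : ℝ} (hm : 0 ≤ m)
    (hpq : ∀ x, m * ‖x‖ ≤ ‖(p - q) x‖) : ‖p + q‖ ^ 2 ≤ 2 * (‖p‖ ^ 2 + ‖q‖ ^ 2) - m ^ 2 := by
  set R := 2 * (‖p‖ ^ 2 + ‖q‖ ^ 2) - m ^ 2
  have hpoint (x : E) : ‖(p + q) x‖ ^ 2 ≤ R * ‖x‖ ^ 2 := by
    have hpar := parallelogram_law_with_norm 𝕜 (p x) (q x)
    have hp := pow_le_pow_left₀ (norm_nonneg _) (p.le_opNorm x) 2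
    have hq := pow_le_pow_left₀ (norm_nonneg _) (q.le_opNorm x) 2
    have hpq₂ := pow_le_pow_left₀ (by positivity) (hpq x) 2
    simp only [add_apply, sub_apply] at hpq₂ ⊢
    nlinarith
  have hR : 0 ≤ R := by
    obtain ⟨x, hx⟩ := exists_ne (0 : E)
    exact (mul_nonneg_iff_of_pos_right (by positivity)).1 ((sq_nonneg _).trans (hpoint x))
  have hnorm : ‖p + q‖ ≤ √R := opNorm_le_bound _ (Real.sqrt_nonneg R) fun x => by
    rw [← Real.sqrt_sq (norm_nonneg x), ← Real.sqrt_mul hR]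
    exact Real.le_sqrt_of_sq_le (hpoint x)
  exact (Real.le_sqrt (norm_nonneg _) hR).1 hnorm

theorem isChebyshev_of_bounded_below [Nontrivial E] (K : Submodule 𝕜 (E →L[𝕜] F))
    [FiniteDimensional 𝕜 K] (hK : ∀ z ∈ K, z ≠ 0 → ∃ m > 0, ∀ x, m * ‖x‖ ≤ ‖z x‖) :
    IsChebyshev (K : Set (E →L[𝕜] F)) := by
  intro a
  obtain ⟨v, hvK, hv⟩ := K.exists_isBestApprox a
  refine ⟨v, ⟨hvK, hv⟩, fun w ⟨hwK, hw⟩ => ?_⟩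
  by_contra hne
  obtain ⟨m, hm, hbound⟩ := hK (v - w) (sub_mem hvK hwK) (sub_ne_zero.2 (Ne.symm hne))
  have hsq := norm_add_sq_le_of_bounded_below hm.le (p := a - w) (q := a - v)
    (by simpa only [sub_sub_sub_cancel_left] using hbound)
  have hvw : ‖a - v‖ = ‖a - w‖ := le_antisymm (hv w hwK) (hw v hvK)
  have hmid : 2 * ‖a - v‖ ≤ ‖(a - w) + (a - v)‖ := by
    have := hv ((2⁻¹ : 𝕜) • (w + v)) (K.smul_mem _ (add_mem hwK hvK))
    have h2 : (a - w) + (a - v) = (2 : 𝕜) • (a - (2⁻¹ : 𝕜) • (w + v)) := by module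
    rwa [h2, norm_smul, RCLike.norm_ofNat, mul_le_mul_iff_right₀ two_pos]
  rw [hvw] at hmid hsq
  nlinarith [norm_nonneg (a - w)]

theorem isChebyshev_span_singleton_of_comp_eq_id [Nontrivial E] {x : E →L[𝕜] F}
    {y : F →L[𝕜] E} (hyx : y ∘L x = .id 𝕜 E) : IsChebyshev (span 𝕜 {x} : Set (E →L[𝕜] F)) := by
  refine isChebyshev_of_bounded_below _ fun z hz hz0 => ?_
  obtain ⟨c, rfl⟩ := mem_span_singleton.1 hz
  have hc : c ≠ 0 := by rintro rfl; exact hz0 (zero_smul _ _)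
  have hy : y ≠ 0 := by
    rintro rfl
    obtain ⟨h, hh⟩ := exists_ne (0 : E)
    exact hh (by simpa using (congrArg (· h) hyx).symm)
  refine ⟨‖c‖ / ‖y‖, by positivity, fun h => ?_⟩
  calc ‖c‖ / ‖y‖ * ‖h‖ = ‖c‖ / ‖y‖ * ‖y (x h)‖ := by rw [← comp_apply, hyx, id_apply]
    _ ≤ ‖c‖ / ‖y‖ * (‖y‖ * ‖x h‖) := by gcongr; exact y.le_opNorm _
    _ = ‖(c • x) h‖ := by
      rw [smul_apply, norm_smul]
      field_simp

end BoundedBelow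

section RankOne

variable {𝕜 E F : Type*} [RCLike 𝕜] [NormedAddCommGroup E] [InnerProductSpace 𝕜 E]
  [NormedAddCommGroup F] [InnerProductSpace 𝕜 F] {x : E →L[𝕜] F} {u : E} {v : F}

theorem one_le_norm_smulRight_sub_smul (hu : ‖u‖ = 1) (hv : ‖v‖ = 1) (hxu : x u = 0) (c : 𝕜) :
    1 ≤ ‖(innerSL 𝕜 u).smulRight v - c • x‖ := by
  have happ : ((innerSL 𝕜 u).smulRight v - c • x) u = v := by
    simp [hxu, inner_self_eq_norm_sq_to_K, hu]
  simpa [happ, hu, hv] using ((innerSL 𝕜 u).smulRight v - c • x).le_opNorm u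

theorem norm_smulRight_sub_smul_le_one (hu : ‖u‖ = 1) (hv : ‖v‖ = 1) (hxu : x u = 0)
    (hvx : ∀ h, ⟪v, x h⟫_𝕜 = 0) {c : 𝕜} (hc : ‖c‖ * ‖x‖ ≤ 1) :
    ‖(innerSL 𝕜 u).smulRight v - c • x‖ ≤ 1 := by
  refine opNorm_le_bound _ zero_le_one fun h => ?_
  set S := 𝕜 ∙ u
  have hsplit := norm_sq_eq_add_norm_sq_starProjection h S
  have hP : S.starProjection h = ⟪u, h⟫_𝕜 • u := starProjection_unit_singleton 𝕜 hu h
  have hxh : x h = x (Sᗮ.starProjection h) := by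
    conv_lhs => rw [← starProjection_add_starProjection_orthogonal (K := S) h]
    rw [map_add, hP, map_smul, hxu, smul_zero, zero_add]
  have hxle : ‖c • x h‖ ≤ ‖Sᗮ.starProjection h‖ := by
    rw [norm_smul, hxh]
    calc ‖c‖ * ‖x (Sᗮ.starProjection h)‖ ≤ ‖c‖ * (‖x‖ * ‖Sᗮ.starProjection h‖) := by
          gcongr; exact x.le_opNorm _
      _ ≤ ‖Sᗮ.starProjection h‖ := by
          rw [← mul_assoc]; exact mul_le_of_le_one_left (norm_nonneg _) hc
  have hpyth : ‖((innerSL 𝕜 u).smulRight v - c • x) h‖ ^ 2 = ‖⟪u, h⟫_𝕜‖ ^ 2 + ‖c • x h‖ ^ 2 := by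
    simp only [sub_apply, smul_apply, smulRight_apply, innerSL_apply_apply]
    rw [@norm_sub_sq 𝕜, inner_smul_left, inner_smul_right, hvx, mul_zero, mul_zero, map_zero,
      mul_zero, sub_zero, norm_smul, hv, mul_one]
  have hPnorm : ‖S.starProjection h‖ = ‖⟪u, h⟫_𝕜‖ := by rw [hP, norm_smul, hu, mul_one]
  rw [one_mul, ← pow_le_pow_iff_left₀ (norm_nonneg _) (norm_nonneg _) two_ne_zero, hpyth,
    hsplit, hPnorm]
  gcongr

variable [CompleteSpace E] [CompleteSpace F]

theorem not_isChebyshev_span_singleton_of_not_injective (hx : x ≠ 0) (hker : ¬Injective x)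
    (hker' : ¬Injective (adjoint x)) : ¬IsChebyshev (span 𝕜 {x} : Set (E →L[𝕜] F)) := by
  obtain ⟨u, hxu, hu⟩ : ∃ u, x u = 0 ∧ u ≠ 0 := by
    simpa [injective_iff_map_eq_zero] using hker
  obtain ⟨v, hxv, hv⟩ : ∃ v, adjoint x v = 0 ∧ v ≠ 0 := by
    simpa [injective_iff_map_eq_zero] using hker'
  have hu₁ : ‖(‖u‖⁻¹ : 𝕜) • u‖ = 1 := norm_smul_inv_norm hu
  have hv₁ : ‖(‖v‖⁻¹ : 𝕜) • v‖ = 1 := norm_smul_inv_norm hv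
  have hxu₁ : x ((‖u‖⁻¹ : 𝕜) • u) = 0 := by rw [map_smul, hxu, smul_zero]
  have hvx (h : E) : ⟪(‖v‖⁻¹ : 𝕜) • v, x h⟫_𝕜 = 0 := by
    rw [inner_smul_left, ← adjoint_inner_left, hxv, inner_zero_left, mul_zero]
  have hxn : ‖x‖ ≠ 0 := norm_ne_zero_iff.2 hx
  refine not_isChebyshev_span_singleton_of_forall_le_norm_sub (c := (‖x‖⁻¹ : 𝕜))
    (smul_ne_zero (by simpa using hxn) hx) ?_ ?_ (one_le_norm_smulRight_sub_smul hu₁ hv₁ hxu₁)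
  · simpa using norm_smulRight_sub_smul_le_one hu₁ hv₁ hxu₁ hvx (c := 0) (by simp)
  · refine norm_smulRight_sub_smul_le_one hu₁ hv₁ hxu₁ hvx ?_
    simp [hxn]

end RankOne

section Polar

variable {H : Type*} [NormedAddCommGroup H] [InnerProductSpace ℂ H] [CompleteSpace H]

theorem norm_cfcAbs_apply (x : H →L[ℂ] H) (h : H) : ‖CFC.abs x h‖ = ‖x h‖ := by
  have hsa : adjoint (CFC.abs x) = CFC.abs x := (CFC.abs_nonneg x).isSelfAdjoint
  have hsq : adjoint (CFC.abs x) ∘L CFC.abs x = adjoint x ∘L x := by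
    rw [hsa]; exact CFC.abs_mul_abs x
  rw [← sq_eq_sq₀ (norm_nonneg _) (norm_nonneg _), apply_norm_sq_eq_inner_adjoint_left,
    apply_norm_sq_eq_inner_adjoint_left, hsq]

theorem exists_linearIsometry_comp_cfcAbs {x : H →L[ℂ] H} (hx : Injective x) :
    ∃ w : H →ₗᵢ[ℂ] H, ∀ h, w (CFC.abs x h) = x h := by
  set m := CFC.abs x
  have hm : Injective m := by
    rw [injective_iff_map_eq_zero] at hx ⊢
    intro h hh
    exact hx h (by rw [← norm_eq_zero, ← norm_cfcAbs_apply, hh, norm_zero])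
  have hdense : DenseRange m := by
    have hnormal : IsStarNormal m := (CFC.abs_nonneg x).isSelfAdjoint.isStarNormal
    rw [DenseRange, ← coe_coe, ← LinearMap.coe_range, dense_iff_topologicalClosure_eq_top,
      topologicalClosure_eq_top_iff, IsStarNormal.orthogonal_range hnormal,
      LinearMap.ker_eq_bot.2 hm]
  have hbound : ∃ C, ∀ h, ‖x h‖ ≤ C * ‖m h‖ := ⟨1, fun h => by rw [norm_cfcAbs_apply, one_mul]⟩
  set w := (x : H →ₗ[ℂ] H).extendOfNorm (m : H →ₗ[ℂ] H)
  have hw (h : H) : w (m h) = x h := LinearMap.extendOfNorm_eq hdense hbound h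
  have hiso (v : H) : ‖w v‖ = ‖v‖ := by
    refine hdense.induction (fun _ ⟨h, hh⟩ => ?_) (isClosed_eq (by fun_prop) continuous_norm) v
    rw [← hh, hw, norm_cfcAbs_apply]
  exact ⟨⟨w.toLinearMap, hiso⟩, hw⟩

theorem not_isChebyshev_span_singleton_of_injective {x : H →L[ℂ] H} (hx : x ≠ 0)
    (hinj : Injective x) (hL : ∀ y, y * x ≠ 1) :
    ¬IsChebyshev (span ℂ {x} : Set (H →L[ℂ] H)) := by
  have : Nontrivial H := by
    contrapose! hx
    exact Subsingleton.elim _ _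
  obtain ⟨w, hw⟩ := exists_linearIsometry_comp_cfcAbs hinj
  set m := CFC.abs x
  have hm : ¬IsUnit m := fun hu => by
    obtain ⟨i, hi⟩ := (hu.mul hu).exists_left_inv
    rw [CFC.abs_mul_abs, ← mul_assoc] at hi
    exact hL _ hi
  have hnorm (c : ℂ) : ‖w.toContinuousLinearMap - c • x‖ = ‖1 - c • m‖ := by
    have : w.toContinuousLinearMap - c • x = w.toContinuousLinearMap ∘L (1 - c • m) := by
      ext h; simp [hw]
    rw [this, LinearIsometry.norm_toContinuousLinearMap_comp]
  have hmn : ‖m‖ ≠ 0 := by rwa [CFC.norm_abs, norm_ne_zero_iff]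
  refine not_isChebyshev_span_singleton_of_forall_le_norm_sub (c := ((‖m‖⁻¹ : ℝ) : ℂ))
    (smul_ne_zero (by simpa using hmn) hx) w.norm_toContinuousLinearMap_le ?_
    fun c => (hnorm c).symm ▸ one_le_norm_one_sub_smul_of_not_isUnit hm c
  rw [hnorm, Complex.coe_smul]
  exact CStarAlgebra.norm_one_sub_smul_le_one (CFC.abs_nonneg x) (by positivity)
    (inv_mul_cancel₀ hmn).le

end Polar

end ContinuousLinearMap

/-- For a non-zero bounded operator `x` on a complex Hilbert space `H`, the line `ℂx` is a
Chebyshev subspace of `B(H)` iff `x` is left invertible or right invertible. -/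
theorem span_singleton_chebyshev_iff_one_sided_invertible
    {H : Type*} [NormedAddCommGroup H] [InnerProductSpace ℂ H] [CompleteSpace H]
    (x : H →L[ℂ] H) (hx : x ≠ 0) :
    (∀ a : H →L[ℂ] H, ∃! v : H →L[ℂ] H,
        v ∈ Submodule.span ℂ ({x} : Set (H →L[ℂ] H)) ∧
        ∀ w ∈ Submodule.span ℂ ({x} : Set (H →L[ℂ] H)), ‖a - v‖ ≤ ‖a - w‖) ↔
    ((∃ y : H →L[ℂ] H, y * x = 1) ∨ (∃ y : H →L[ℂ] H, x * y = 1)) := by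
  have : Nontrivial H := by
    contrapose! hx
    exact Subsingleton.elim _ _
  have hstar := isChebyshev_span_singleton_star_iff (𝕜 := ℂ) x
  change IsChebyshev (span ℂ {x} : Set (H →L[ℂ] H)) ↔ _
  constructor
  · contrapose!
    rintro ⟨hL, hR⟩
    by_cases hinj : Injective x
    · exact ContinuousLinearMap.not_isChebyshev_span_singleton_of_injective hx hinj hL
    by_cases hinj' : Injective ⇑(star x)
    · have hL' (y : H →L[ℂ] H) : y * star x ≠ 1 := fun hy => hR (star y) <| by
        simpa using congrArg star hy
      rw [← hstar]
      exact ContinuousLinearMap.not_isChebyshev_span_singleton_of_injective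
        (star_ne_zero.2 hx) hinj' hL'
    · exact ContinuousLinearMap.not_isChebyshev_span_singleton_of_not_injective hx hinj hinj'
  · rintro (⟨y, hy⟩ | ⟨y, hy⟩)
    · exact ContinuousLinearMap.isChebyshev_span_singleton_of_comp_eq_id hy
    · have hy' : star y * star x = 1 := by simpa using congrArg star hy
      exact hstar.1 (ContinuousLinearMap.isChebyshev_span_singleton_of_comp_eq_id hy')
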